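/- Let λ be a 1-form on a 2n-dimensional manifold F° with dλ symplectic, ψ a diffeomorphism of F° with ψ*(dλ) = dλ and λ_ψ := ψ*λ - λ compactly supported, and κ : [0,2π] → [0,1] smooth with κ' compactly supported in (0,2π). Define Y on F° by ι_Y dλ = λ_ψ. Then for the 1-form α_s = dx + s(λ + κ(x)λ_ψ) on [0,2π] × F°, the vector field R := (∂_x - κ'(x)Y)/(1 - s·κ'(x)·λ(Y)) satisfies ι_R dα_s = 0 and α_s(R) = 1, i.e. R is the Reeb vector field of α_s wherever 1 - s·κ'·λ(Y) > 0. -/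
import Mathlib


/-- The Reeb vector field of `α_s = dx + s(λ + κ(x)λ_ψ)` on `[0,2π] × F°` is
`R = (∂_x - κ'(x)Y)/(1 - s κ'(x) λ(Y))`, where `ι_Y dλ = λ_ψ`: one has
`ι_R dα_s = 0` and `α_s(R) = 1` wherever `1 - s κ' λ(Y) > 0`.

Forms are modelled as elements of an abstract ℝ-algebra `Ω` (wedge = `*`,
scalars embedded via `algebraMap`), vector fields as elements of an ℝ-module `X`,
and the interior product as a bilinear map `ι : X → Ω → Ω`.  The hypotheses record
the pointwise values of the interior products of `∂_x` and `Y` with the forms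
`dx, λ, λ_ψ, dλ, dx ∧ λ_ψ` (in particular `λ_ψ(Y) = dλ(Y,Y) = 0` and the
antiderivation rule for `ι` on `dx ∧ λ_ψ`), `lamY` being the scalar `λ(Y)`, and the
formula `dα_s = s(κ' dx ∧ λ_ψ + dλ)`. -/
theorem stmt_12 (Ω : Type*) [Ring Ω] [Algebra ℝ Ω]
    (X : Type*) [AddCommGroup X] [Module ℝ X]
    (ι : X →ₗ[ℝ] Ω →ₗ[ℝ] Ω)
    (dx lam lamψ dlam : Ω) (px Y : X) (s κ κ' lamY : ℝ)
    -- Y is defined by ι_Y dλ = λ_ψ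
    (hY : ι Y dlam = lamψ)
    -- pointwise interior products
    (h1 : ι px dx = 1) (h2 : ι px lam = 0) (h3 : ι px lamψ = 0)
    (h4 : ι px dlam = 0)
    (h5 : ι Y dx = 0) (h6 : ι Y lam = algebraMap ℝ Ω lamY)
    (h7 : ι Y lamψ = 0)  -- λ_ψ(Y) = dλ(Y,Y) = 0
    -- antiderivation rule on the 2-form dx ∧ λ_ψ
    (h8 : ι px (dx * lamψ) = lamψ)
    (h9 : ι Y (dx * lamψ) = 0)
    -- positivity of the normalizing factor
    (hpos : 0 < 1 - s * κ' * lamY) :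
    -- α_s := dx + s(λ + κ λ_ψ), dα_s = s(κ' dx∧λ_ψ + dλ),
    -- R := (1 - s κ' λ(Y))⁻¹ (∂_x - κ' Y)
    ι ((1 - s * κ' * lamY)⁻¹ • (px - κ' • Y)) (s • (κ' • (dx * lamψ) + dlam)) = 0 ∧
    ι ((1 - s * κ' * lamY)⁻¹ • (px - κ' • Y)) (dx + s • (lam + κ • lamψ)) = 1 := by
  have hne : (1 - s * κ' * lamY) ≠ 0 := ne_of_gt hpos
  constructor
  · simp only [map_smul, map_sub, map_add, LinearMap.smul_apply, LinearMap.sub_apply,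
      LinearMap.add_apply, hY, h4, h8, h9, h7, smul_sub, smul_add, smul_zero, zero_add,
      sub_zero, zero_sub, smul_smul]
    module
  · simp only [map_smul, map_sub, map_add, LinearMap.smul_apply, LinearMap.sub_apply,
      LinearMap.add_apply, h1, h2, h3, h5, h6, h7, hY, smul_sub, smul_add, smul_zero,
      sub_zero, add_zero, zero_add, zero_sub, smul_smul, Algebra.algebraMap_eq_smul_one]
    rw [show (1 - s * κ' * lamY)⁻¹ • (1:Ω) + s • -(((1 - s * κ' * lamY)⁻¹ * κ' * lamY) • (1:Ω)) =
        ((1 - s * κ' * lamY)⁻¹ * (1 - s * κ' * lamY)) • (1:Ω) by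
          rw [show (1 - s * κ' * lamY)⁻¹ * (1 - s * κ' * lamY) =
            (1 - s * κ' * lamY)⁻¹ - s * ((1 - s * κ' * lamY)⁻¹ * κ' * lamY) by ring]; module,
      inv_mul_cancel₀ hne, one_smul]
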